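/- For every integer n, the group with presentation on four generators a₁, b₁, a₂, b₂ with relators b₁b₂, b₂a₂b₂⁻¹a₁, a₁b₂, all six pairwise commutators [a₁,b₁], [a₁,a₂], [a₁,b₂], [b₁,a₂], [b₁,b₂], [a₂,b₂], and the additional relator b₂ⁿ is isomorphic to ℤ/nℤ; in particular it is trivial when n = ±1 and cyclic of order |n| when |n| ≥ 2. -/
import Mathlib

/-!
For every integer n, the group presented on a₁, b₁, a₂, b₂ with relators b₁b₂,
b₂a₂b₂⁻¹a₁, a₁b₂, all six pairwise commutators, and b₂ⁿ is isomorphic to ℤ/nℤ,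
interpreted as ZMod n.natAbs (so ℤ when n = 0, trivial when n = ±1, cyclic of
order |n| when |n| ≥ 2).
Generators: a₁ = 0, b₁ = 1, a₂ = 2, b₂ = 3.
-/

namespace Stmt13

def a₁ : FreeGroup (Fin 4) := FreeGroup.of 0
def b₁ : FreeGroup (Fin 4) := FreeGroup.of 1
def a₂ : FreeGroup (Fin 4) := FreeGroup.of 2
def b₂ : FreeGroup (Fin 4) := FreeGroup.of 3

def rels (n : ℤ) : Set (FreeGroup (Fin 4)) :=
  { b₁ * b₂,
    b₂ * a₂ * b₂⁻¹ * a₁,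
    a₁ * b₂,
    a₁ * b₁ * a₁⁻¹ * b₁⁻¹,
    a₁ * a₂ * a₁⁻¹ * a₂⁻¹,
    a₁ * b₂ * a₁⁻¹ * b₂⁻¹,
    b₁ * a₂ * b₁⁻¹ * a₂⁻¹,
    b₁ * b₂ * b₁⁻¹ * b₂⁻¹,
    a₂ * b₂ * a₂⁻¹ * b₂⁻¹,
    b₂ ^ n }

theorem pi1_after_luttinger_Zn (n : ℤ) :
    Nonempty (PresentedGroup (rels n) ≃* Multiplicative (ZMod n.natAbs)) := by
  set k := n.natAbs with hk
  -- the target element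
  set x : Multiplicative (ZMod k) := Multiplicative.ofAdd 1 with hx
  have hxm : ∀ m : ℤ, x ^ m = Multiplicative.ofAdd ((m : ZMod k)) := by
    intro m
    rw [hx, ← ofAdd_zsmul]
    congr 1
    simp [zsmul_eq_mul]
  have hxn : x ^ n = 1 := by
    rw [hxm]
    have : ((n : ℤ) : ZMod k) = 0 := by
      rw [ZMod.intCast_zmod_eq_zero_iff_dvd]
      exact Int.natAbs_dvd.mpr dvd_rfl
    simp [this]
  -- the map on generators
  set f : Fin 4 → Multiplicative (ZMod k) := ![x⁻¹, x⁻¹, x, x] with hf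
  have hrels : ∀ r ∈ rels n, FreeGroup.lift f r = 1 := by
    intro r hr
    simp only [rels, Set.mem_insert_iff, Set.mem_singleton_iff] at hr
    rcases hr with rfl | rfl | rfl | rfl | rfl | rfl | rfl | rfl | rfl | rfl <;>
      simp only [a₁, b₁, a₂, b₂, map_mul, map_inv, map_zpow, FreeGroup.lift_apply_of, hf,
        Matrix.cons_val_zero, Matrix.cons_val_one, Matrix.head_cons,
        Matrix.cons_val_two, Matrix.tail_cons, Matrix.cons_val_three]
    case _ => group
    case _ => group
    case _ => group
    case _ => group
    case _ => group
    case _ => group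
    case _ => group
    case _ => group
    case _ => group
    case _ => exact hxn
  -- forward homomorphism
  set φ : PresentedGroup (rels n) →* Multiplicative (ZMod k) := PresentedGroup.toGroup hrels
    with hφ
  -- images of relators vanish in the presented group
  have hmk : ∀ r ∈ rels n, PresentedGroup.mk (rels n) r = 1 := by
    intro r hr
    exact (QuotientGroup.eq_one_iff _).mpr (Subgroup.subset_normalClosure hr)
  set y : PresentedGroup (rels n) := PresentedGroup.of 3 with hy
  have hyn : y ^ n = 1 := by
    have := hmk (b₂ ^ n) (by simp [rels])
    rw [map_zpow] at this
    exact this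
  have hyk : y ^ (k : ℤ) = 1 := by
    rcases Int.natAbs_eq n with h | h
    · rw [← hk] at h; rw [← h]; exact hyn
    · rw [← hk] at h
      have : ((k : ℤ)) = -n := by omega
      rw [this, zpow_neg, hyn, inv_one]
  -- backward homomorphism via ZMod.lift
  set fZ : ℤ →+ Additive (PresentedGroup (rels n)) :=
    zmultiplesHom (Additive (PresentedGroup (rels n))) (Additive.ofMul y) with hfZ
  have hfZ0 : fZ (k : ℤ) = 0 := by
    show (k : ℤ) • Additive.ofMul y = 0
    rw [← ofMul_zpow, hyk]
    rfl
  set ψ : Multiplicative (ZMod k) →* PresentedGroup (rels n) :=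
    AddMonoidHom.toMultiplicativeLeft (ZMod.lift k ⟨fZ, hfZ0⟩) with hψ
  have hψm : ∀ m : ℤ, ψ (Multiplicative.ofAdd ((m : ZMod k))) = y ^ m := by
    intro m
    show (ZMod.lift k ⟨fZ, hfZ0⟩ ((m : ZMod k))).toMul = y ^ m
    rw [ZMod.lift_coe]
    show ((m • Additive.ofMul y : Additive (PresentedGroup (rels n)))).toMul = y ^ m
    rw [toMul_zsmul]
    rfl
  -- φ on generators
  have hφof : ∀ i : Fin 4, φ (PresentedGroup.of i) = f i := fun i =>
    PresentedGroup.toGroup.of hrels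
  -- generators in terms of y
  have hof0 : (PresentedGroup.of 0 : PresentedGroup (rels n)) = y⁻¹ := by
    have := hmk (a₁ * b₂) (by simp [rels])
    rw [map_mul] at this
    simp only [a₁, b₂] at this
    rw [eq_inv_iff_mul_eq_one]
    exact this
  have hof1 : (PresentedGroup.of 1 : PresentedGroup (rels n)) = y⁻¹ := by
    have := hmk (b₁ * b₂) (by simp [rels])
    rw [map_mul] at this
    simp only [b₁, b₂] at this
    rw [eq_inv_iff_mul_eq_one]
    exact this
  have hof2 : (PresentedGroup.of 2 : PresentedGroup (rels n)) = y := by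
    have := hmk (b₂ * a₂ * b₂⁻¹ * a₁) (by simp [rels])
    simp only [map_mul, map_inv, a₁, a₂, b₂] at this
    have hdef : ∀ i : Fin 4, PresentedGroup.mk (rels n) (FreeGroup.of i)
        = PresentedGroup.of i := fun _ => rfl
    rw [hdef, hdef, hdef, hof0] at this
    have h2 : y * PresentedGroup.of 2 * y⁻¹ = y := by
      rw [← mul_inv_eq_one]
      convert this using 1
    have := congrArg (fun g => y⁻¹ * g * y) h2
    simpa [mul_assoc] using this
  -- build the equivalence
  refine ⟨{ toFun := φ, invFun := ψ, map_mul' := φ.map_mul, left_inv := ?_, right_inv := ?_ }⟩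
  · -- left inverse : ψ ∘ φ = id
    intro g
    have hψx : ψ x = y := by simpa using hψm 1
    have : ψ.comp φ = MonoidHom.id _ := by
      apply PresentedGroup.ext
      intro i
      fin_cases i
      · show ψ (φ (PresentedGroup.of 0)) = PresentedGroup.of 0
        rw [hφof]
        show ψ x⁻¹ = _
        rw [map_inv, hψx, hof0]
      · show ψ (φ (PresentedGroup.of 1)) = PresentedGroup.of 1
        rw [hφof]
        show ψ x⁻¹ = _
        rw [map_inv, hψx, hof1]
      · show ψ (φ (PresentedGroup.of 2)) = PresentedGroup.of 2
        rw [hφof]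
        show ψ x = _
        rw [hψx, hof2]
      · show ψ (φ (PresentedGroup.of 3)) = PresentedGroup.of 3
        rw [hφof]
        show ψ x = _
        rw [hψx]
    exact DFunLike.congr_fun this g
  · -- right inverse : φ ∘ ψ = id
    intro z
    obtain ⟨m, hm⟩ := ZMod.intCast_surjective (Multiplicative.toAdd z)
    have hz : z = Multiplicative.ofAdd ((m : ZMod k)) := by
      rw [hm]; rfl
    rw [hz, hψm, map_zpow]
    have : φ y = x := by
      have := hφof 3
      simpa [hf] using this
    rw [this, hxm]
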